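/- Exponential finite model property for the one-variable fragment of QK with unbounded counting quantifiers: there exists a constant k ∈ ℕ such that for every one-variable first-order modal formula φ with counting quantifiers, if φ is satisfiable with respect to QK, then φ is satisfiable in a constant domain first-order Kripke model M = (W,R,D,d,I) with |W| ≤ 2^{(|φ|+2)^k} and |D| ≤ 2^{(|φ|+2)^k}. -/

import Mathlib

/-! Syntax of one-variable first-order modal formulas with counting quantifiers:
    φ ::= P(x) | ¬φ | (φ∧φ) | ◇φ | ∃[≤c]x φ. -/

inductive Fml : Type
  | atom : ℕ → Fml
  | neg : Fml → Fml
  | conj : Fml → Fml → Fml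
  | dia : Fml → Fml
  | countLe : ℕ → Fml → Fml
deriving DecidableEq

namespace Fml

/-- Subformulas. -/
def sub : Fml → Finset Fml
  | atom n => {atom n}
  | neg ψ => insert (neg ψ) ψ.sub
  | conj ψ χ => insert (conj ψ χ) (ψ.sub ∪ χ.sub)
  | dia ψ => insert (dia ψ) ψ.sub
  | countLe c ψ => insert (countLe c ψ) ψ.sub

/-- Modal depth. -/
def md : Fml → ℕ
  | atom _ => 0
  | neg ψ => ψ.md
  | conj ψ χ => max ψ.md χ.md
  | dia ψ => ψ.md + 1
  | countLe _ ψ => ψ.md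

/-- Capacity: the largest counting-quantifier subscript (0 if none). -/
def cpt : Fml → ℕ
  | atom _ => 0
  | neg ψ => ψ.cpt
  | conj ψ χ => max ψ.cpt χ.cpt
  | dia ψ => ψ.cpt
  | countLe c ψ => max c ψ.cpt

/-- Length of the formula as a string, counting subscripts written in binary. -/
def len : Fml → ℕ
  | atom _ => 1
  | neg ψ => ψ.len + 1
  | conj ψ χ => ψ.len + χ.len + 1
  | dia ψ => ψ.len + 1
  | countLe c ψ => ψ.len + Nat.size c + 1

/-- Predicate symbols occurring in a formula. -/
def preds : Fml → Finset ℕ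
  | atom n => {n}
  | neg ψ => ψ.preds
  | conj ψ χ => ψ.preds ∪ χ.preds
  | dia ψ => ψ.preds
  | countLe _ ψ => ψ.preds

def imp (ψ χ : Fml) : Fml := neg (conj ψ (neg χ))
def or (ψ χ : Fml) : Fml := neg (conj (neg ψ) (neg χ))
def iff (ψ χ : Fml) : Fml := conj (ψ.imp χ) (χ.imp ψ)
def box (ψ : Fml) : Fml := neg (dia (neg ψ))
/-- `∃x ψ := ¬∃[≤0]x ψ`. -/
def ex (ψ : Fml) : Fml := neg (countLe 0 ψ)
/-- `∀x ψ := ∃[≤0]x ¬ψ`. -/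
def fal (ψ : Fml) : Fml := countLe 0 (neg ψ)
/-- A tautology. -/
def top : Fml := neg (conj (atom 0) (neg (atom 0)))

/-- `boxIter n ψ` is `□^n ψ`. -/
def boxIter : ℕ → Fml → Fml
  | 0, ψ => ψ
  | n+1, ψ => (boxIter n ψ).box

/-- `boxLe m ψ` is `⋀_{k=0}^{m} □^k ψ`. -/
def boxLe : ℕ → Fml → Fml
  | 0, ψ => ψ
  | n+1, ψ => conj (boxLe n ψ) (boxIter (n+1) ψ)

end Fml

/-- A first-order Kripke model `M = (W,R,D,d,I)` (unary predicates suffice for the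
one-variable fragment). -/
structure KModel where
  W : Type
  R : W → W → Prop
  D : Type
  Dne : Nonempty D
  dom : W → Set D
  domNe : ∀ w, (dom w).Nonempty
  I : W → ℕ → Set D
  Isub : ∀ w p, I w p ⊆ dom w

/-- Satisfaction `M,w ⊨^a φ`. -/
def KModel.sat (M : KModel) : Fml → M.W → M.D → Prop
  | .atom p, w, a => a ∈ M.I w p
  | .neg ψ, w, a => ¬ M.sat ψ w a
  | .conj ψ χ, w, a => M.sat ψ w a ∧ M.sat χ w a
  | .dia ψ, w, a => ∃ v, M.R w v ∧ M.sat ψ v a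
  | .countLe c ψ, w, _ => {b | b ∈ M.dom w ∧ M.sat ψ w b}.encard ≤ (c : ℕ∞)

def KModel.constDom (M : KModel) : Prop := ∀ u v, M.dom u = M.dom v
def KModel.expDom (M : KModel) : Prop := ∀ u v, M.R u v → M.dom u ⊆ M.dom v
def KModel.decDom (M : KModel) : Prop := ∀ u v, M.R u v → M.dom v ⊆ M.dom u

/-- Satisfiability with respect to QK (constant domains). -/
def satQK (φ : Fml) : Prop :=
  ∃ M : KModel, M.constDom ∧ ∃ w a, a ∈ M.dom w ∧ M.sat φ w a

/-- Satisfiability with respect to QK^exp (expanding domains). -/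
def satQKexp (φ : Fml) : Prop :=
  ∃ M : KModel, M.expDom ∧ ∃ w a, a ∈ M.dom w ∧ M.sat φ w a

/-- Satisfiability with respect to QK^dec (decreasing domains). -/
def satQKdec (φ : Fml) : Prop :=
  ∃ M : KModel, M.decDom ∧ ∃ w a, a ∈ M.dom w ∧ M.sat φ w a

/-- `R` is the immediate-successor (parent–child) relation of a rooted irreflexive
intransitive tree of depth ≤ m with root `r`. -/
def IsTreeOfDepth {W : Type} (R : W → W → Prop) (r : W) (m : ℕ) : Prop :=
  ∃ depth : W → ℕ,
    depth r = 0 ∧ (∀ w, depth w ≤ m) ∧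
    (∀ u v, R u v → depth v = depth u + 1) ∧
    (∀ v, v ≠ r → ∃! u, R u v) ∧
    (∀ v, Relation.ReflTransGen R r v)

/-! Let `φ` hold at `(w₀, a₀)` in a constant-domain model with domain `S`. Call the subformulas of
`φ` of modal depth at most `md φ - d` that an element satisfies at a world its `d`-type there.
A counting quantifier with subscript at most `cpt φ` only sees how many elements each type class
has, up to any bound `N > cpt φ`. So if a finite set `ι` is mapped into `S` so that every `d`-type
class at `u` receives as many points as it has, counted up to `N_d = φ.threshold d`, then every
subformula of depth at most `md φ - d` is evaluated at `u` as in the original model.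

Such a map can be pushed along an edge `u R v`: inside each `d`-class, sample every class of
`(d+1)`-types at `v` up to `N_{d+1}`, match the sample injectively into the preimage, and send the
remaining points to a large class. This works as soon as `N_d > 2 ^ |sub φ| * N_{d+1}`, and it keeps
the `d`-type of every point and the image of one chosen point. Unravelling these steps into a tree
of depth `md φ`, branching over pairs (point of `ι`, `◇`-subformula), gives a model of size
exponential in `|φ|`. -/

open Set

theorem eq_of_min_eq_min_of_lt {α : Type*} [LinearOrder α] {a b N : α}
    (h : min a N = min b N) (hb : b < N) : a = b := by
  rw [min_eq_left hb.le] at h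
  rcases le_or_gt N a with ha | ha
  · rw [min_eq_right ha] at h
    exact absurd hb (h ▸ lt_irrefl N)
  · rwa [min_eq_left ha.le] at h

theorem le_iff_le_of_min_eq_min {α : Type*} [LinearOrder α] {a b N c : α}
    (h : min a N = min b N) (hc : c < N) : a ≤ c ↔ b ≤ c := by
  have key : ∀ x : α, x ≤ c ↔ min x N ≤ c := fun x => by
    rw [min_le_iff, or_iff_left (not_le.2 hc)]
  rw [key a, key b, h]

theorem ENat.min_add_congr {a a' b b' N : ℕ∞} (ha : min a N = min a' N)
    (hb : min b N = min b' N) : min (a + b) N = min (a' + b') N := by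
  have key : ∀ x y : ℕ∞, min (x + y) N = min (min x N + min y N) N := by
    intro x y
    rcases le_total x N with hx | hx <;> rcases le_total y N with hy | hy
    · rw [min_eq_left hx, min_eq_left hy]
    · rw [min_eq_right hy, min_eq_right (le_add_left hy), min_eq_right le_add_self]
    all_goals rw [min_eq_right hx, min_eq_right (le_add_right hx), min_eq_right le_self_add]
  rw [key, ha, hb, ← key]

namespace Set

variable {α ι κ : Type*}

theorem eq_of_subset_of_min_encard_eq {s t : Set α} {N : ℕ∞} (hts : t ⊆ s)
    (h : min t.encard N = min s.encard N) (hs : s.encard < N) : t = s := by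
  have hs' : s.Finite := encard_ne_top_iff.1 (hs.trans_le le_top).ne
  exact (hs'.subset hts).eq_of_subset_of_encard_le hts (eq_of_min_eq_min_of_lt h hs).ge

theorem encard_le_card_mul {s : Set α} {k : α → κ} {K : Finset κ} (hK : ∀ b ∈ s, k b ∈ K)
    {N : ℕ∞} (h : ∀ c ∈ K, (s ∩ k ⁻¹' {c}).encard ≤ N) : s.encard ≤ K.card * N := by
  have hs : s ⊆ ⋃ c ∈ K, s ∩ k ⁻¹' {c} := fun b hb => mem_biUnion (hK b hb) ⟨hb, rfl⟩
  calc s.encard ≤ ∑ c ∈ K, (s ∩ k ⁻¹' {c}).encard :=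
        (encard_le_encard hs).trans (K.set_encard_biUnion_le _)
    _ ≤ ∑ _c ∈ K, N := Finset.sum_le_sum h
    _ = K.card * N := by rw [Finset.sum_const, nsmul_eq_mul]

theorem exists_subset_encard_eq_min_of_mem (s : Set α) (N : ℕ∞) (a : α) (hN : 0 < N) :
    ∃ t ⊆ s, t.encard = min s.encard N ∧ (a ∈ s → a ∈ t) := by
  by_cases ha : a ∈ s
  · obtain ⟨t, hat, hts, ht⟩ := exists_superset_subset_encard_eq (singleton_subset_iff.2 ha)
      (by rw [encard_singleton]
          exact le_min (one_le_encard_iff_nonempty.2 ⟨a, ha⟩) (Order.one_le_iff_pos.2 hN))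
      (min_le_left s.encard N)
    exact ⟨t, hts, ht, fun _ => hat rfl⟩
  · obtain ⟨t, hts, ht⟩ := exists_subset_encard_eq (min_le_left s.encard N)
    exact ⟨t, hts, ht, fun h => absurd h ha⟩

theorem exists_subset_min_encard_fiber_eq (S : Set α) (k : α → κ) {K : Finset κ}
    (hK : ∀ b ∈ S, k b ∈ K) {N : ℕ} (hN : 0 < N) (a : α) :
    ∃ T ⊆ S, T.encard ≤ K.card * N ∧ (a ∈ S → a ∈ T) ∧
      ∀ c, min (T ∩ k ⁻¹' {c}).encard N = min (S ∩ k ⁻¹' {c}).encard N := by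
  choose U hUS hU haU using fun c =>
    exists_subset_encard_eq_min_of_mem (S ∩ k ⁻¹' {c}) N a (by exact_mod_cast hN)
  have hfiber : ∀ c, {b | b ∈ U (k b)} ∩ k ⁻¹' {c} = U c := by
    intro c; ext b
    refine ⟨fun ⟨hb, hbc⟩ => ?_, fun hb => ⟨?_, (hUS c hb).2⟩⟩
    · obtain rfl : k b = c := hbc
      exact hb
    · obtain rfl : k b = c := (hUS c hb).2
      exact hb
  have hTS : {b | b ∈ U (k b)} ⊆ S := fun b hb => (hUS _ hb).1
  refine ⟨{b | b ∈ U (k b)}, hTS, ?_, fun ha => haU (k a) ⟨ha, rfl⟩, fun c => ?_⟩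
  · refine encard_le_card_mul (fun b hb => hK b (hTS hb)) fun c _ => ?_
    rw [hfiber, hU]
    exact min_le_right _ _
  · rw [hfiber, hU, inf_right_idem]

theorem Finite.exists_injOn_mapsTo_apply_eq {T : Set α} {G : Set ι} (hT : T.Finite)
    (h : T.encard ≤ G.encard) {a₀ : α} {e₀ : ι} (h₀ : e₀ ∈ G → a₀ ∈ T) :
    ∃ γ : α → ι, MapsTo γ T G ∧ InjOn γ T ∧ (e₀ ∈ G → γ a₀ = e₀) := by
  classical
  have : Nonempty ι := ⟨e₀⟩
  obtain ⟨γ, hγT, hγinj⟩ := hT.exists_injOn_of_encard_le h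
  by_cases he : e₀ ∈ G
  · refine ⟨Equiv.swap (γ a₀) e₀ ∘ γ, fun b hb => ?_, (Equiv.injective _).comp_injOn hγinj,
      fun _ => by simp⟩
    simp only [Function.comp_apply, Equiv.swap_apply_def]
    split_ifs
    exacts [he, hγT (h₀ he), hγT hb]
  · exact ⟨γ, hγT, hγinj, fun h => absurd h he⟩

theorem exists_large_fiber_or_encard_le {G : Set ι} {C T : Set α} {k : α → κ} {N N' : ℕ}
    (hTC : T ⊆ C) (hTfib : ∀ c, min (T ∩ k ⁻¹' {c}).encard N' = min (C ∩ k ⁻¹' {c}).encard N')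
    (hTN : T.encard < N) (hGC : min G.encard N = min C.encard N) :
    (∃ z ∈ C, (N' : ℕ∞) ≤ (C ∩ k ⁻¹' {k z}).encard) ∨ G.encard ≤ T.encard := by
  refine or_iff_not_imp_left.2 fun hbig => ?_
  push Not at hbig
  have hTC' : T = C := hTC.antisymm fun b hb =>
    ((eq_of_subset_of_min_encard_eq (inter_subset_inter_left _ hTC) (hTfib (k b))
      (hbig b hb)).symm.subset ⟨hb, rfl⟩).1
  exact (hTC' ▸ eq_of_min_eq_min_of_lt hGC (hTC' ▸ hTN)).le

theorem LeftInvOn.encard_inter_le_encard_inter_preimage {g : ι → α} {γ : α → ι} {T : Set α}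
    {G : Set ι} (h : LeftInvOn g γ T) (hγ : MapsTo γ T G) (s : Set α) :
    (T ∩ s).encard ≤ (G ∩ g ⁻¹' s).encard := by
  rw [← (h.injOn.mono inter_subset_left).encard_image]
  refine encard_le_encard ?_
  rintro _ ⟨b, hb, rfl⟩
  exact ⟨hγ hb.1, by rw [mem_preimage, h hb.1]; exact hb.2⟩

theorem exists_map_min_encard_fiber_eq [Nonempty α] {G : Set ι} {C : Set α} {k : α → κ}
    {K : Finset κ} (hK : ∀ b ∈ C, k b ∈ K) {N N' : ℕ} (hN : K.card * N' < N) (hN' : 0 < N')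
    (hGC : min G.encard N = min C.encard N) {e₀ : ι} {a₀ : α} (h₀ : e₀ ∈ G → a₀ ∈ C) :
    ∃ g : ι → α, MapsTo g G C ∧ (e₀ ∈ G → g e₀ = a₀) ∧
      ∀ c, min (G ∩ g ⁻¹' (k ⁻¹' {c})).encard N' = min (C ∩ k ⁻¹' {c}).encard N' := by
  classical
  obtain ⟨T, hTC, hTcard, ha₀T, hTfib⟩ := exists_subset_min_encard_fiber_eq C k hK hN' a₀
  have hTN : T.encard < N := hTcard.trans_lt (by exact_mod_cast hN)
  have hT : T.Finite := encard_ne_top_iff.1 (hTN.trans_le le_top).ne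
  have hTG : T.encard ≤ G.encard :=
    calc T.encard ≤ min C.encard N := le_min (encard_le_encard hTC) hTN.le
      _ = min G.encard N := hGC.symm
      _ ≤ G.encard := min_le_left _ _
  obtain ⟨γ, hγG, hγinj, hγ₀⟩ := hT.exists_injOn_mapsTo_apply_eq hTG fun he => ha₀T (h₀ he)
  -- the points of `G` outside `γ '' T` all go to one point `z` of a large fibre
  obtain ⟨z, hz⟩ : ∃ z, ∀ e ∈ G, e ∉ γ '' T → z ∈ C ∧ (N' : ℕ∞) ≤ (C ∩ k ⁻¹' {k z}).encard := by
    rcases exists_large_fiber_or_encard_le hTC hTfib hTN hGC with ⟨z, hzC, hz⟩ | hGT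
    · exact ⟨z, fun _ _ _ => ⟨hzC, hz⟩⟩
    have hγT : γ '' T = G := (hT.image γ).eq_of_subset_of_encard_le (image_subset_iff.2 hγG)
      (by rwa [hγinj.encard_image])
    exact ⟨Classical.arbitrary α, fun e he heT => absurd (hγT ▸ he) heT⟩
  set g : ι → α := fun e => if e ∈ γ '' T then Function.invFunOn γ T e else z with hg
  have hg_γ : LeftInvOn g γ T := fun b hb => by
    simp only [hg, mem_image_of_mem γ hb, if_true, hγinj.leftInvOn_invFunOn hb]
  have hg_T : ∀ e ∈ γ '' T, g e ∈ T ∧ γ (g e) = e := fun e he => by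
    simp only [hg, he, if_true]
    exact ⟨Function.invFunOn_mem he, Function.invFunOn_eq he⟩
  refine ⟨g, fun e he => ?_, fun he => by rw [← hγ₀ he, hg_γ (ha₀T (h₀ he))], fun c => ?_⟩
  · by_cases h : e ∈ γ '' T
    · exact hTC (hg_T e h).1
    · simpa only [hg, h, if_false] using (hz e he h).1
  have hlow := hg_γ.encard_inter_le_encard_inter_preimage hγG (k ⁻¹' {c})
  rcases lt_or_ge (C ∩ k ⁻¹' {c}).encard N' with hc | hc
  · have hup : G ∩ g ⁻¹' (k ⁻¹' {c}) ⊆ γ '' (T ∩ k ⁻¹' {c}) := by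
      rintro e ⟨he, hec⟩
      by_cases h : e ∈ γ '' T
      · exact ⟨g e, ⟨(hg_T e h).1, hec⟩, (hg_T e h).2⟩
      · have hze : g e = z := by simp only [hg, h, if_false]
        rw [mem_preimage, hze, mem_preimage, mem_singleton_iff] at hec
        exact absurd (hec ▸ (hz e he h).2) (not_le.2 hc)
    rw [← eq_of_subset_of_min_encard_eq (inter_subset_inter_left _ hTC) (hTfib c) hc,
      le_antisymm ((encard_le_encard hup).trans (encard_image_le _ _)) hlow]
  · have hTc : (N' : ℕ∞) ≤ (T ∩ k ⁻¹' {c}).encard := by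
      have := hTfib c
      rw [min_eq_right hc] at this
      exact this ▸ min_le_left _ _
    rw [min_eq_right hc, min_eq_right (hTc.trans hlow)]

end Set

/-- `f : ι → S` reproduces, for every fibre of `k` in `S`, its number of elements counted up to
`N`. -/
def IsTruncCopy {α ι κ : Type*} (N : ℕ) (S : Set α) (k : α → κ) (f : ι → α) : Prop :=
  (∀ i, f i ∈ S) ∧ ∀ c, min (f ⁻¹' (k ⁻¹' {c})).encard N = min (S ∩ k ⁻¹' {c}).encard N

namespace IsTruncCopy

variable {α ι κ κ' : Type*} {N : ℕ} {S : Set α} {k : α → κ} {f : ι → α}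

theorem of_subset {T : Set α} (hTS : T ⊆ S)
    (h : ∀ c, min (T ∩ k ⁻¹' {c}).encard N = min (S ∩ k ⁻¹' {c}).encard N) :
    IsTruncCopy N S k (Subtype.val : T → α) :=
  ⟨fun e => hTS e.2, fun c => by
    rw [← Subtype.val_injective.encard_image, Subtype.image_preimage_coe]
    exact h c⟩

theorem preimage_finset (hf : IsTruncCopy N S k f) (U : Finset κ) :
    min (f ⁻¹' (k ⁻¹' U)).encard N = min (S ∩ k ⁻¹' U).encard N := by
  classical
  induction U using Finset.induction_on with
  | empty => simp
  | insert c U hc ih =>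
    have hdisj : Disjoint (k ⁻¹' {c}) (k ⁻¹' U) :=
      disjoint_singleton_left.2 (by exact_mod_cast hc) |>.preimage k
    rw [Finset.coe_insert, insert_eq, preimage_union, preimage_union, inter_union_distrib_left,
      encard_union_eq (hdisj.preimage f),
      encard_union_eq (hdisj.mono inter_subset_right inter_subset_right)]
    exact ENat.min_add_congr (hf.2 c) ih

theorem preimage (hf : IsTruncCopy N S k f) {K : Finset κ} (hK : ∀ b ∈ S, k b ∈ K)
    (V : Set κ) : min (f ⁻¹' (k ⁻¹' V)).encard N = min (S ∩ k ⁻¹' V).encard N := by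
  classical
  have hV : ∀ b ∈ S, k b ∈ V ↔ k b ∈ (K.filter (· ∈ V) : Set κ) := fun b hb => by
    simp [hK b hb]
  convert hf.preimage_finset (K.filter (· ∈ V)) using 3
  · ext i
    exact hV (f i) (hf.1 i)
  · ext b
    exact and_congr_right (hV b)

theorem comp (hf : IsTruncCopy N S k f) {K : Finset κ} (hK : ∀ b ∈ S, k b ∈ K) (h : κ → κ') :
    IsTruncCopy N S (h ∘ k) f :=
  ⟨hf.1, fun c => hf.preimage hK (h ⁻¹' {c})⟩

theorem exists_refine [Nonempty α] {N' : ℕ} {k' : α → κ'} (hf : IsTruncCopy N S k f)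
    {K : Finset κ} {K' : Finset κ'} (hK : ∀ b ∈ S, k b ∈ K) (hK' : ∀ b ∈ S, k' b ∈ K')
    (hN : K'.card * N' < N) (hN' : 0 < N') (e₀ : ι) :
    ∃ g : ι → α, (∀ e, k (g e) = k (f e)) ∧ g e₀ = f e₀ ∧ IsTruncCopy N' S k' g := by
  choose g hgC hg₀ hgfib using fun τ =>
    Set.exists_map_min_encard_fiber_eq (G := f ⁻¹' (k ⁻¹' {τ})) (C := S ∩ k ⁻¹' {τ})
      (fun b hb => hK' b hb.1) hN hN' (hf.2 τ) (e₀ := e₀) fun he => ⟨hf.1 e₀, he⟩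
  have hgC' : ∀ e, g (k (f e)) e ∈ S ∩ k ⁻¹' {k (f e)} := fun e => hgC _ rfl
  refine ⟨fun e => g (k (f e)) e, fun e => (hgC' e).2, hg₀ _ rfl, ?_⟩
  have hpair : IsTruncCopy N' S (fun b => (k b, k' b)) (fun e => g (k (f e)) e) := by
    refine ⟨fun e => (hgC' e).1, fun ⟨τ, σ⟩ => ?_⟩
    convert hgfib τ σ using 3
    · ext e
      simp only [mem_preimage, mem_singleton_iff, Prod.mk.injEq, mem_inter_iff]
      constructor
      · rintro ⟨h, rfl⟩
        obtain rfl : k (f e) = τ := (hgC' e).2.symm.trans h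
        exact ⟨rfl, rfl⟩
      · rintro ⟨rfl, h⟩
        exact ⟨(hgC' e).2, h⟩
    · ext b
      simp [and_assoc]
  exact hpair.comp (K := K ×ˢ K') (fun b hb => Finset.mem_product.2 ⟨hK b hb, hK' b hb⟩)
    Prod.snd

end IsTruncCopy

section ListsOfBoundedLength

variable {β : Type*}

theorem injective_getElem?_of_length_le (m : ℕ) :
    Function.Injective fun (l : {l : List β // l.length ≤ m}) (i : Fin m) => l.1[(i : ℕ)]? := by
  intro l l' h
  refine Subtype.ext (List.ext_getElem? fun n => ?_)
  by_cases hn : n < m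
  · exact congrFun h ⟨n, hn⟩
  · rw [List.getElem?_eq_none (l.2.trans (not_lt.1 hn)),
      List.getElem?_eq_none (l'.2.trans (not_lt.1 hn))]

instance finite_length_le [Finite β] (m : ℕ) : Finite {l : List β // l.length ≤ m} :=
  Finite.of_injective _ (injective_getElem?_of_length_le m)

theorem card_length_le_le [Finite β] (m : ℕ) :
    Nat.card {l : List β // l.length ≤ m} ≤ (Nat.card β + 1) ^ m := by
  have := Nat.card_le_card_of_injective _ (injective_getElem?_of_length_le (β := β) m)
  rwa [Nat.card_fun, Finite.card_option, Nat.card_fin] at this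

end ListsOfBoundedLength

namespace Fml

theorem mem_sub_self (φ : Fml) : φ ∈ φ.sub := by
  cases φ <;> simp [sub]

theorem card_sub_le_len (φ : Fml) : φ.sub.card ≤ φ.len := by
  induction φ with
  | atom n => simp [sub, len]
  | neg χ ih | dia χ ih | countLe _ χ ih =>
    exact (Finset.card_insert_le _ _).trans (by simp only [len]; omega)
  | conj χ₁ χ₂ ih₁ ih₂ =>
    have := Finset.card_union_le χ₁.sub χ₂.sub
    exact (Finset.card_insert_le _ _).trans (by simp only [len]; omega)

theorem md_le_len (φ : Fml) : φ.md ≤ φ.len := by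
  induction φ <;> simp only [md, len] <;> omega

theorem cpt_lt_two_pow_len (φ : Fml) : φ.cpt < 2 ^ φ.len := by
  have mono : ∀ {a b c : ℕ}, a < 2 ^ b → b ≤ c → a < 2 ^ c := fun h hbc =>
    h.trans_le (Nat.pow_le_pow_right two_pos hbc)
  induction φ with
  | atom n => simp [cpt, len]
  | neg χ ih | dia χ ih => exact mono ih (by simp only [len]; omega)
  | conj χ₁ χ₂ ih₁ ih₂ =>
    exact max_lt (mono ih₁ (by simp only [len]; omega)) (mono ih₂ (by simp only [len]; omega))
  | countLe c χ ih =>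
    exact max_lt (mono (Nat.lt_size_self c) (by simp only [len]; omega))
      (mono ih (by simp only [len]; omega))

/-- `cpt φ + 1` exceeds every counting subscript, and each factor `2 ^ |sub φ| + 1` pays for one
refinement step, in which a class of `d`-types splits into at most `2 ^ |sub φ|` classes. -/
def threshold (φ : Fml) (d : ℕ) : ℕ := (φ.cpt + 1) * (2 ^ φ.sub.card + 1) ^ (φ.md - d)

theorem cpt_lt_threshold (φ : Fml) (d : ℕ) : φ.cpt < φ.threshold d :=
  (Nat.lt_succ_self _).trans_le (Nat.le_mul_of_pos_right _ (Nat.pow_pos (Nat.succ_pos _)))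

theorem threshold_pos (φ : Fml) (d : ℕ) : 0 < φ.threshold d :=
  (Nat.zero_le _).trans_lt (φ.cpt_lt_threshold d)

theorem card_mul_threshold_succ_lt (φ : Fml) {d : ℕ} (hd : d < φ.md) :
    2 ^ φ.sub.card * φ.threshold (d + 1) < φ.threshold d := by
  have h : φ.md - d = φ.md - (d + 1) + 1 := by omega
  have hpos : 0 < (φ.cpt + 1) * (2 ^ φ.sub.card + 1) ^ (φ.md - (d + 1)) := by positivity
  rw [threshold, threshold, h, pow_succ]
  nlinarith

theorem two_pow_card_mul_threshold_le (φ : Fml) :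
    2 ^ φ.sub.card * φ.threshold 0 ≤ 2 ^ (φ.len ^ 2 + 3 * φ.len) := by
  have hn := Nat.pow_le_pow_right two_pos φ.card_sub_le_len
  calc 2 ^ φ.sub.card * φ.threshold 0
      ≤ 2 ^ φ.len * (2 ^ φ.len * (2 ^ (φ.len + 1)) ^ φ.len) := by
        refine Nat.mul_le_mul hn (Nat.mul_le_mul φ.cpt_lt_two_pow_len ?_)
        calc (2 ^ φ.sub.card + 1) ^ (φ.md - 0) ≤ (2 ^ (φ.len + 1)) ^ (φ.md - 0) :=
              Nat.pow_le_pow_left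
                (by rw [pow_succ]; have := Nat.one_le_two_pow (n := φ.len); omega) _
          _ ≤ _ := Nat.pow_le_pow_right (Nat.two_pow_pos _) (by have := φ.md_le_len; omega)
    _ = 2 ^ (φ.len ^ 2 + 3 * φ.len) := by rw [← pow_mul, ← pow_add, ← pow_add]; ring_nf

end Fml

namespace KModel

open Classical in
/-- The `d`-type of `b` at `u`. -/
noncomputable def tp (M : KModel) (φ : Fml) (d : ℕ) (u : M.W) (b : M.D) : Finset Fml :=
  φ.sub.filter fun ψ => ψ.md + d ≤ φ.md ∧ M.sat ψ u b

section Types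

variable {M : KModel} {φ : Fml}

theorem tp_mem_powerset {d : ℕ} {u : M.W} {b : M.D} : M.tp φ d u b ∈ φ.sub.powerset := by
  classical
  exact Finset.mem_powerset.2 (Finset.filter_subset _ _)

theorem mem_tp_iff {d : ℕ} {u : M.W} {b : M.D} {ψ : Fml} (hψ : ψ ∈ φ.sub)
    (hmd : ψ.md + d ≤ φ.md) : ψ ∈ M.tp φ d u b ↔ M.sat ψ u b := by
  classical
  rw [tp, Finset.mem_filter]
  exact ⟨fun h => h.2.2, fun h => ⟨hψ, hmd, h⟩⟩

theorem encard_sat_le_iff {ι : Type*} {S : Set M.D} {d : ℕ} {u : M.W} {f : ι → M.D}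
    (hf : IsTruncCopy (φ.threshold d) S (M.tp φ d u) f) {χ : Fml} (hχ : χ ∈ φ.sub)
    (hmd : χ.md + d ≤ φ.md) {c : ℕ} (hc : c ≤ φ.cpt) :
    {e | M.sat χ u (f e)}.encard ≤ c ↔ {b | b ∈ S ∧ M.sat χ u b}.encard ≤ c := by
  have h := hf.preimage (fun _ _ => tp_mem_powerset) {τ | χ ∈ τ}
  simp only [preimage_ofPred_eq, mem_tp_iff hχ hmd] at h
  exact le_iff_le_of_min_eq_min h (by exact_mod_cast hc.trans_lt (φ.cpt_lt_threshold d))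

end Types

section Unravel

variable {M : KModel} {ι : Type} (S : Set M.D) (φ : Fml)

/-- A state at depth `d` is a world `p.1` of `M` with an interpretation `p.2` of the finite
domain `ι`. -/
def IsGoodState (d : ℕ) (p : M.W × (ι → M.D)) : Prop :=
  IsTruncCopy (φ.threshold d) S (M.tp φ d p.1) p.2

structure IsSucc (d : ℕ) (p : M.W × (ι → M.D)) (e : ι) (χ : Fml) (q : M.W × (ι → M.D)) :
    Prop where
  rel : M.R p.1 q.1
  sat_witness : M.sat χ q.1 (q.2 e)
  tp_eq : ∀ e', M.tp φ d p.1 (q.2 e') = M.tp φ d p.1 (p.2 e')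
  good : IsGoodState S φ (d + 1) q

open Classical in
noncomputable def succ (d : ℕ) (p : M.W × (ι → M.D)) (e : ι) (χ : Fml) : M.W × (ι → M.D) :=
  if h : ∃ q, IsSucc S φ d p e χ q then h.choose else p

noncomputable def state (root : M.W × (ι → M.D)) : List (ι × φ.sub) → M.W × (ι → M.D)
  | [] => root
  | x :: l => succ S φ l.length (state root l) x.1 x.2

/-- The unravelling of depth `md φ`: a node is the list of the witness requests
(point, body of a `◇`-subformula) on the path to it from the root. -/
noncomputable def unravel [Nonempty ι] (root : M.W × (ι → M.D)) : KModel where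
  W := {l : List (ι × φ.sub) // l.length ≤ φ.md}
  R v w := ∃ x, w.1 = x :: v.1 ∧
    IsSucc S φ v.1.length (state S φ root v.1) x.1 x.2 (state S φ root w.1)
  D := ι
  Dne := inferInstance
  dom _ := univ
  domNe _ := univ_nonempty
  I w p := {e | (state S φ root w.1).2 e ∈ M.I (state S φ root w.1).1 p}
  Isub _ _ := subset_univ _

variable {S φ}

theorem exists_isSucc {d : ℕ} (hd : d < φ.md) {p : M.W × (ι → M.D)} (hp : IsGoodState S φ d p)
    {e : ι} {χ : Fml} (h : M.sat (.dia χ) p.1 (p.2 e)) : ∃ q, IsSucc S φ d p e χ q := by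
  have := M.Dne
  obtain ⟨v, huv, hv⟩ := h
  obtain ⟨g, hg, hge, hgood⟩ := IsTruncCopy.exists_refine hp (fun _ _ => tp_mem_powerset)
    (fun _ _ => tp_mem_powerset)
    (by rw [Finset.card_powerset]; exact φ.card_mul_threshold_succ_lt hd) (φ.threshold_pos _) e
  exact ⟨(v, g), huv, show M.sat χ v (g e) by rwa [hge], hg, hgood⟩

theorem isSucc_succ {d : ℕ} {p : M.W × (ι → M.D)} {e : ι} {χ : Fml}
    (h : ∃ q, IsSucc S φ d p e χ q) : IsSucc S φ d p e χ (succ S φ d p e χ) := by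
  rw [succ, dif_pos h]
  exact h.choose_spec

theorem IsSucc.sat_dia {d : ℕ} {p q : M.W × (ι → M.D)} {e' : ι} {χ' : Fml}
    (h : IsSucc S φ d p e' χ' q) {χ : Fml} (hχ : Fml.dia χ ∈ φ.sub) (hmd : χ.md + 1 + d ≤ φ.md)
    {e : ι} (he : M.sat χ q.1 (q.2 e)) : M.sat (.dia χ) p.1 (p.2 e) := by
  rw [← mem_tp_iff hχ hmd, ← h.tp_eq e, mem_tp_iff hχ hmd]
  exact ⟨q.1, h.rel, he⟩

theorem sat_unravel_iff [Nonempty ι] (hS : ∀ u, M.dom u = S) (root : M.W × (ι → M.D))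
    (ψ : Fml) (hψ : ψ.sub ⊆ φ.sub) (hcpt : ψ.cpt ≤ φ.cpt) (w : (unravel S φ root).W)
    (hw : IsGoodState S φ w.1.length (state S φ root w.1)) (hmd : ψ.md + w.1.length ≤ φ.md)
    (e : ι) :
    (unravel S φ root).sat ψ w e ↔
      M.sat ψ (state S φ root w.1).1 ((state S φ root w.1).2 e) := by
  induction ψ generalizing w e with
  | atom n => exact Iff.rfl
  | neg χ ih => exact not_congr (ih ((Finset.subset_insert _ _).trans hψ) hcpt w hw hmd e)
  | conj χ₁ χ₂ ih₁ ih₂ =>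
    simp only [Fml.sub, Finset.insert_subset_iff, Finset.union_subset_iff] at hψ
    simp only [Fml.cpt, max_le_iff] at hcpt
    simp only [Fml.md] at hmd
    exact and_congr (ih₁ hψ.2.1 hcpt.1 w hw (by omega) e) (ih₂ hψ.2.2 hcpt.2 w hw (by omega) e)
  | dia χ ih =>
    have hχ : χ.sub ⊆ φ.sub := (Finset.subset_insert _ _).trans hψ
    simp only [Fml.md] at hmd
    constructor
    · rintro ⟨v, ⟨x, hvx, hsucc⟩, hv⟩
      have hvlen : v.1.length = w.1.length + 1 := by rw [hvx, List.length_cons]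
      exact hsucc.sat_dia (hψ χ.dia.mem_sub_self) hmd
        ((ih hχ hcpt v (hvlen ▸ hsucc.good) (by omega) e).1 hv)
    · intro h
      have hsucc := isSucc_succ (exists_isSucc (by omega) hw h)
      let x : ι × φ.sub := (e, ⟨χ, hχ χ.mem_sub_self⟩)
      let v : (unravel S φ root).W := ⟨x :: w.1, by simp only [List.length_cons]; omega⟩
      exact ⟨v, ⟨x, rfl, hsucc⟩,
        (ih hχ hcpt v hsucc.good (by simp only [v, List.length_cons]; omega) e).2 hsucc.sat_witness⟩
  | countLe c χ ih =>
    have hχ : χ.sub ⊆ φ.sub := (Finset.subset_insert _ _).trans hψ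
    simp only [Fml.cpt, max_le_iff] at hcpt
    simp only [Fml.md] at hmd
    change {b | b ∈ univ ∧ (unravel S φ root).sat χ w b}.encard ≤ c ↔
      {b | b ∈ M.dom _ ∧ M.sat χ _ b}.encard ≤ c
    rw [hS, ← encard_sat_le_iff hw (hχ χ.mem_sub_self) hmd hcpt.1]
    simp only [mem_univ, true_and]
    rw [show {b | (unravel S φ root).sat χ w b} = _ from Set.ext fun b => ih hχ hcpt.2 w hw hmd b]
    rfl

end Unravel

theorem exists_finite_model {M : KModel} (hM : M.constDom) {φ : Fml} {w₀ : M.W} {a₀ : M.D}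
    (ha₀ : a₀ ∈ M.dom w₀) (hφ : M.sat φ w₀ a₀) :
    ∃ M' : KModel, M'.constDom ∧ Finite M'.W ∧ Finite M'.D ∧
      Nat.card M'.W ≤ 2 ^ ((φ.len ^ 2 + 4 * φ.len) * φ.len) ∧
      Nat.card M'.D ≤ 2 ^ (φ.len ^ 2 + 3 * φ.len) ∧
      ∃ w a, a ∈ M'.dom w ∧ M'.sat φ w a := by
  obtain ⟨T, hTS, hTcard, ha₀T, hTfib⟩ := exists_subset_min_encard_fiber_eq (M.dom w₀)
    (M.tp φ 0 w₀) (fun _ _ => tp_mem_powerset) (φ.threshold_pos 0) a₀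
  have : Nonempty T := ⟨⟨a₀, ha₀T ha₀⟩⟩
  rw [Finset.card_powerset] at hTcard
  obtain ⟨hTfin, hTncard⟩ := encard_le_coe_iff_finite_ncard_le.1 (by exact_mod_cast hTcard)
  have : Finite T := hTfin.to_subtype
  have hcardT : Nat.card T ≤ 2 ^ (φ.len ^ 2 + 3 * φ.len) :=
    (Nat.card_coe_set_eq T ▸ hTncard).trans φ.two_pow_card_mul_threshold_le
  have hcardB : Nat.card (T × φ.sub) + 1 ≤ 2 ^ (φ.len ^ 2 + 4 * φ.len) := by
    rw [Nat.card_prod, Nat.card_eq_fintype_card (α := φ.sub), Fintype.card_coe]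
    calc Nat.card T * φ.sub.card + 1 ≤ Nat.card T * (φ.sub.card + 1) := by
          have := Nat.card_pos (α := T); nlinarith
      _ ≤ 2 ^ (φ.len ^ 2 + 3 * φ.len) * 2 ^ φ.len :=
          Nat.mul_le_mul hcardT (φ.card_sub_le_len.trans_lt Nat.lt_two_pow_self)
      _ = 2 ^ (φ.len ^ 2 + 4 * φ.len) := by rw [← pow_add]; ring_nf
  let root : M.W × (T → M.D) := (w₀, Subtype.val)
  refine ⟨unravel (M.dom w₀) φ root, fun _ _ => rfl, finite_length_le _, this, ?_, hcardT,
    ⟨[], Nat.zero_le _⟩, ⟨a₀, ha₀T ha₀⟩, mem_univ _,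
    (sat_unravel_iff (fun u => hM u w₀) root φ subset_rfl le_rfl ⟨[], Nat.zero_le _⟩
      (IsTruncCopy.of_subset hTS hTfib) (by simp) _).2 hφ⟩
  calc Nat.card {l : List (T × φ.sub) // l.length ≤ φ.md}
      ≤ (Nat.card (T × φ.sub) + 1) ^ φ.md := card_length_le_le _
    _ ≤ (2 ^ (φ.len ^ 2 + 4 * φ.len)) ^ φ.len :=
        (Nat.pow_le_pow_left hcardB _).trans
          (Nat.pow_le_pow_right (Nat.two_pow_pos _) φ.md_le_len)
    _ = 2 ^ ((φ.len ^ 2 + 4 * φ.len) * φ.len) := (pow_mul _ _ _).symm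

end KModel

/-- exponential finite model property for the one-variable fragment of QK
with unbounded counting quantifiers (binary-coded subscripts). -/
theorem stmt_4 : ∃ k : ℕ, ∀ φ : Fml, satQK φ →
    ∃ M : KModel, M.constDom ∧ Finite M.W ∧ Finite M.D ∧
      Nat.card M.W ≤ 2 ^ ((φ.len + 2) ^ k) ∧ Nat.card M.D ≤ 2 ^ ((φ.len + 2) ^ k) ∧
      ∃ w a, a ∈ M.dom w ∧ M.sat φ w a := by
  refine ⟨3, fun φ ⟨M, hM, w₀, a₀, ha₀, hφ⟩ => ?_⟩
  obtain ⟨M', hM', hW, hD, hcardW, hcardD, hsat⟩ := KModel.exists_finite_model hM ha₀ hφ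
  have hexpW : (φ.len ^ 2 + 4 * φ.len) * φ.len ≤ (φ.len + 2) ^ 3 := by nlinarith
  have hexpD : φ.len ^ 2 + 3 * φ.len ≤ (φ.len + 2) ^ 3 := by nlinarith
  exact ⟨M', hM', hW, hD, hcardW.trans (Nat.pow_le_pow_right two_pos hexpW),
    hcardD.trans (Nat.pow_le_pow_right two_pos hexpD), hsat⟩
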